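/- arXiv:2302.00998 — 6 statements merged into one kernel-verified Lean document; each statement's English description precedes it below -/
import Mathlib

section
/- Let a ≥ 0 and b ≥ 0 be real numbers such that tanh²(a) ≥ tanh(b). Then all four coefficients in the expansion of the local Boltzmann factor exp(a·(s1+s2) − b·s1·s2) over s1, s2 ∈ {−1,1} are non-negative; explicitly: cosh²(a)·cosh(b) − sinh²(a)·sinh(b) > 0, cosh(a)·sinh(a)·(cosh(b) − sinh(b)) ≥ 0, and sinh²(a)·cosh(b) − cosh²(a)·sinh(b) ≥ 0. -/
/-!
Since `cosh b - sinh b = exp (-b)` and `cosh a ^ 2 = sinh a ^ 2 + 1`, the first coefficient equals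
`sinh a ^ 2 * exp (-b) + cosh b > 0` and the second is `cosh a * sinh a * exp (-b) ≥ 0` for `a ≥ 0`.
The third is non-negative exactly when `tanh b ≤ tanh a ^ 2`, after clearing the positive
denominators `cosh a ^ 2` and `cosh b`.
-/

open Real

namespace Real

theorem cosh_sq_mul_cosh_sub_sinh_sq_mul_sinh (a b : ℝ) :
    cosh a ^ 2 * cosh b - sinh a ^ 2 * sinh b = sinh a ^ 2 * exp (-b) + cosh b := by
  rw [← cosh_sub_sinh, cosh_sq]
  ring

theorem cosh_sq_mul_cosh_sub_sinh_sq_mul_sinh_pos (a b : ℝ) :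
    0 < cosh a ^ 2 * cosh b - sinh a ^ 2 * sinh b := by
  rw [cosh_sq_mul_cosh_sub_sinh_sq_mul_sinh]
  exact add_pos_of_nonneg_of_pos (by positivity) (cosh_pos b)

theorem cosh_mul_sinh_mul_cosh_sub_sinh_nonneg {a : ℝ} (ha : 0 ≤ a) (b : ℝ) :
    0 ≤ cosh a * sinh a * (cosh b - sinh b) := by
  rw [cosh_sub_sinh]
  have := sinh_nonneg_iff.mpr ha
  positivity

theorem tanh_le_tanh_sq_iff (a b : ℝ) :
    tanh b ≤ tanh a ^ 2 ↔ cosh a ^ 2 * sinh b ≤ sinh a ^ 2 * cosh b := by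
  rw [tanh_eq_sinh_div_cosh, tanh_eq_sinh_div_cosh, div_pow,
    div_le_div_iff₀ (cosh_pos b) (by positivity), mul_comm]

end Real

theorem stmt_2_general (a b : ℝ) (ha : 0 ≤ a)
    (h : Real.tanh a ^ 2 ≥ Real.tanh b) :
    0 < Real.cosh a ^ 2 * Real.cosh b - Real.sinh a ^ 2 * Real.sinh b ∧
    0 ≤ Real.cosh a * Real.sinh a * (Real.cosh b - Real.sinh b) ∧
    0 ≤ Real.sinh a ^ 2 * Real.cosh b - Real.cosh a ^ 2 * Real.sinh b :=
  ⟨cosh_sq_mul_cosh_sub_sinh_sq_mul_sinh_pos a b, cosh_mul_sinh_mul_cosh_sub_sinh_nonneg ha b,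
    sub_nonneg.mpr ((tanh_le_tanh_sq_iff a b).mp h)⟩

theorem stmt_2 (a b : ℝ) (ha : 0 ≤ a) (hb : 0 ≤ b)
    (h : Real.tanh a ^ 2 ≥ Real.tanh b) :
    0 < Real.cosh a ^ 2 * Real.cosh b - Real.sinh a ^ 2 * Real.sinh b ∧
    0 ≤ Real.cosh a * Real.sinh a * (Real.cosh b - Real.sinh b) ∧
    0 ≤ Real.sinh a ^ 2 * Real.cosh b - Real.cosh a ^ 2 * Real.sinh b :=
  stmt_2_general a b ha h
end

section
/- Let X be the real 2×2 matrix with zero diagonal and off-diagonal entries equal to 1 (the Pauli x matrix), let 1 denote the 2×2 identity matrix, and let ⊗ denote the Kronecker product of matrices. Then for all real numbers a and b, the matrix exponential satisfies exp(a·(X ⊗ 1 + 1 ⊗ X) − b·(X ⊗ X)) = (cosh²(a)·cosh(b) − sinh²(a)·sinh(b))·(1 ⊗ 1) + cosh(a)·sinh(a)·(cosh(b) − sinh(b))·(X ⊗ 1 + 1 ⊗ X) + (sinh²(a)·cosh(b) − cosh²(a)·sinh(b))·(X ⊗ X). -/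
set_option maxHeartbeats 1000000

open Real Matrix Kronecker

theorem stmt_3 (a b : ℝ) :
    let X : Matrix (Fin 2) (Fin 2) ℝ := !![0, 1; 1, 0]
    NormedSpace.exp
        (a • (X ⊗ₖ (1 : Matrix (Fin 2) (Fin 2) ℝ) + (1 : Matrix (Fin 2) (Fin 2) ℝ) ⊗ₖ X)
          - b • (X ⊗ₖ X)) =
      (Real.cosh a ^ 2 * Real.cosh b - Real.sinh a ^ 2 * Real.sinh b) •
          ((1 : Matrix (Fin 2) (Fin 2) ℝ) ⊗ₖ (1 : Matrix (Fin 2) (Fin 2) ℝ))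
        + (Real.cosh a * Real.sinh a * (Real.cosh b - Real.sinh b)) •
          (X ⊗ₖ (1 : Matrix (Fin 2) (Fin 2) ℝ) + (1 : Matrix (Fin 2) (Fin 2) ℝ) ⊗ₖ X)
        + (Real.sinh a ^ 2 * Real.cosh b - Real.cosh a ^ 2 * Real.sinh b) • (X ⊗ₖ X) := by
  intro X
  set H : Matrix (Fin 2) (Fin 2) ℝ := !![1, 1; 1, -1] with hHdef
  set W : Matrix (Fin 2 × Fin 2) (Fin 2 × Fin 2) ℝ := H ⊗ₖ H with hWdef
  have hWW : W * ((4:ℝ)⁻¹ • W) = 1 := by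
    ext ⟨i, i'⟩ ⟨j, j'⟩
    fin_cases i <;> fin_cases i' <;> fin_cases j <;> fin_cases j' <;>
      simp [hWdef, hHdef, Matrix.mul_apply, Fintype.sum_prod_type, Fin.sum_univ_two,
        Matrix.one_apply, Prod.ext_iff] <;> norm_num
  have hWW' : ((4:ℝ)⁻¹ • W) * W = 1 := by
    ext ⟨i, i'⟩ ⟨j, j'⟩
    fin_cases i <;> fin_cases i' <;> fin_cases j <;> fin_cases j' <;>
      simp [hWdef, hHdef, Matrix.mul_apply, Fintype.sum_prod_type, Fin.sum_univ_two,
        Matrix.one_apply, Prod.ext_iff] <;> norm_num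
  set U : (Matrix (Fin 2 × Fin 2) (Fin 2 × Fin 2) ℝ)ˣ := ⟨W, (4:ℝ)⁻¹ • W, hWW, hWW'⟩ with hUdef
  set v : Fin 2 × Fin 2 → ℝ := fun p => !![2*a - b, b; b, -(2*a) - b] p.1 p.2 with hvdef
  have key : a • (X ⊗ₖ (1 : Matrix (Fin 2) (Fin 2) ℝ) + (1 : Matrix (Fin 2) (Fin 2) ℝ) ⊗ₖ X)
          - b • (X ⊗ₖ X) = (U : Matrix (Fin 2 × Fin 2) (Fin 2 × Fin 2) ℝ) * diagonal v * ((U⁻¹ : (Matrix (Fin 2 × Fin 2) (Fin 2 × Fin 2) ℝ)ˣ) : Matrix (Fin 2 × Fin 2) (Fin 2 × Fin 2) ℝ) := by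
    ext ⟨i, i'⟩ ⟨j, j'⟩
    fin_cases i <;> fin_cases i' <;> fin_cases j <;> fin_cases j' <;>
      simp [hUdef, hWdef, hHdef, hvdef, Matrix.mul_apply, Fintype.sum_prod_type,
        Fin.sum_univ_two, Matrix.one_apply, Prod.ext_iff, Matrix.diagonal, X] <;> ring
  rw [key, Matrix.exp_units_conj U, Matrix.exp_diagonal, Pi.exp_def]
  have hexp : ∀ x : ℝ, NormedSpace.exp x = Real.exp x := fun x => (congrFun Real.exp_eq_exp_ℝ x).symm
  have h1 : Real.exp (2*a - b) = Real.exp a * Real.exp a * (Real.exp b)⁻¹ := by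
    rw [show (2:ℝ)*a - b = a + a + -b by ring, Real.exp_add, Real.exp_add, Real.exp_neg]
  have h2 : Real.exp (-(2*a) - b) = (Real.exp a)⁻¹ * (Real.exp a)⁻¹ * (Real.exp b)⁻¹ := by
    rw [show -((2:ℝ)*a) - b = (-a) + (-a) + -b by ring, Real.exp_add, Real.exp_add,
      Real.exp_neg, Real.exp_neg]
  ext ⟨i, i'⟩ ⟨j, j'⟩
  fin_cases i <;> fin_cases i' <;> fin_cases j <;> fin_cases j' <;>
    · simp [hUdef, hWdef, hHdef, hvdef, Matrix.mul_apply, Fintype.sum_prod_type,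
        Fin.sum_univ_two, Matrix.one_apply, Prod.ext_iff, Matrix.diagonal, X, hexp, h1, h2,
        Real.cosh_eq, Real.sinh_eq, Real.exp_neg]
      field_simp
      ring
end

section
/- Let c1 and d2 be real numbers with d2 > 2·c1 > 0, and define α1 := (1/4)·log((exp(4c1+2d2) + exp(−4c1−2d2) − 2)/(exp(2d2) + exp(−2d2) − exp(4c1) − exp(−4c1))), α2 := (1/4)·log((exp(2d2) + exp(−2d2) − exp(4c1) − exp(−4c1))/(exp(2d2) + exp(−2d2) − 2)), and α3 := (1/4)·log((exp(2d2) + exp(−2d2) − exp(4c1) − exp(−4c1))·(exp(2d2) + exp(−2d2) − 2)). Then for all s1, s2 ∈ {−1, 1}: exp(α1·(s1 + s2) + α2·s1·s2 + α3) = 2·sinh(d2 + c1·(s1 + s2)). -/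
open Real

lemma half_log_eq (t y : ℝ) (ht : 0 < t) (hy : 0 ≤ y) (h : y ^ 2 = t) :
    Real.exp ((1 / 2) * Real.log t) = y := by
  have he : Real.exp ((1 / 2) * Real.log t) ^ 2 = t := by
    rw [← Real.exp_nat_mul]
    have : (2 : ℝ) * ((1 / 2) * Real.log t) = Real.log t := by ring
    simp only [Nat.cast_ofNat]
    rw [this, Real.exp_log ht]
  have hpos : 0 < Real.exp ((1 / 2) * Real.log t) := Real.exp_pos _
  nlinarith [he, h, hpos, hy]

theorem stmt_7 (c1 d2 : ℝ) (hc1 : 0 < c1) (hd2 : 2 * c1 < d2)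
    (α1 α2 α3 : ℝ)
    (hα1 : α1 = (1 / 4) * Real.log
      ((Real.exp (4 * c1 + 2 * d2) + Real.exp (-(4 * c1) - 2 * d2) - 2) /
        (Real.exp (2 * d2) + Real.exp (-(2 * d2)) - Real.exp (4 * c1) - Real.exp (-(4 * c1)))))
    (hα2 : α2 = (1 / 4) * Real.log
      ((Real.exp (2 * d2) + Real.exp (-(2 * d2)) - Real.exp (4 * c1) - Real.exp (-(4 * c1))) /
        (Real.exp (2 * d2) + Real.exp (-(2 * d2)) - 2)))
    (hα3 : α3 = (1 / 4) * Real.log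
      ((Real.exp (2 * d2) + Real.exp (-(2 * d2)) - Real.exp (4 * c1) - Real.exp (-(4 * c1))) *
        (Real.exp (2 * d2) + Real.exp (-(2 * d2)) - 2))) :
    ∀ s1 s2 : ℝ, (s1 = -1 ∨ s1 = 1) → (s2 = -1 ∨ s2 = 1) →
      Real.exp (α1 * (s1 + s2) + α2 * (s1 * s2) + α3) =
        2 * Real.sinh (d2 + c1 * (s1 + s2)) := by
  -- abbreviations
  set a := Real.exp c1 with ha
  set b := Real.exp d2 with hb
  have hapos : 0 < a := Real.exp_pos _
  have hbpos : 0 < b := Real.exp_pos _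
  have ha1 : 1 < a := by rw [ha]; exact Real.one_lt_exp_iff.mpr hc1
  have hA4 : Real.exp (4 * c1 + 2 * d2) = a ^ 4 * b ^ 2 := by
    rw [Real.exp_add, ha, hb, ← Real.exp_nat_mul, ← Real.exp_nat_mul]; norm_num
  have hA4' : Real.exp (-(4 * c1) - 2 * d2) = (a ^ 4 * b ^ 2)⁻¹ := by
    rw [show -(4 * c1) - 2 * d2 = -(4 * c1 + 2 * d2) by ring, Real.exp_neg, hA4]
  have h2d : Real.exp (2 * d2) = b ^ 2 := by
    rw [hb, ← Real.exp_nat_mul]; norm_num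
  have h2d' : Real.exp (-(2 * d2)) = (b ^ 2)⁻¹ := by rw [Real.exp_neg, h2d]
  have h4c : Real.exp (4 * c1) = a ^ 4 := by
    rw [ha, ← Real.exp_nat_mul]; norm_num
  have h4c' : Real.exp (-(4 * c1)) = (a ^ 4)⁻¹ := by rw [Real.exp_neg, h4c]
  -- the three key quantities
  set A := a ^ 4 * b ^ 2 + (a ^ 4 * b ^ 2)⁻¹ - 2 with hAdef
  set B := b ^ 2 + (b ^ 2)⁻¹ - a ^ 4 - (a ^ 4)⁻¹ with hBdef
  set C := b ^ 2 + (b ^ 2)⁻¹ - 2 with hCdef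
  -- inequalities between exponentials
  have hab : 1 < a ^ 4 * b ^ 2 := by
    have := Real.one_lt_exp_iff.mpr (show 0 < 4 * c1 + 2 * d2 by linarith)
    rwa [hA4] at this
  have hba : a ^ 4 < b ^ 2 := by
    have := Real.exp_lt_exp.mpr (show 4 * c1 < 2 * d2 by linarith)
    rwa [h4c, h2d] at this
  have hb1 : 1 < b ^ 2 := by
    have := Real.one_lt_exp_iff.mpr (show 0 < 2 * d2 by linarith)
    rwa [h2d] at this
  have ha1' : 1 < a ^ 4 := by
    have := Real.one_lt_exp_iff.mpr (show 0 < 4 * c1 by linarith)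
    rwa [h4c] at this
  have habpos : 0 < a ^ 4 * b ^ 2 := by positivity
  have ha4pos : 0 < a ^ 4 := by positivity
  have hb2pos : 0 < b ^ 2 := by positivity
  have hApos : 0 < A := by
    rw [hAdef]
    have h0 : 0 < a ^ 4 * b ^ 2 - 1 := by linarith
    have h1 : (0:ℝ) < (a ^ 4 * b ^ 2 - 1) ^ 2 / (a ^ 4 * b ^ 2) :=
      div_pos (pow_pos h0 2) habpos
    have h2 : (a ^ 4 * b ^ 2 - 1) ^ 2 / (a ^ 4 * b ^ 2)
        = a ^ 4 * b ^ 2 + (a ^ 4 * b ^ 2)⁻¹ - 2 := by field_simp; ring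
    linarith [h2 ▸ h1]
  have hBpos : 0 < B := by
    rw [hBdef]
    have h2 : b ^ 2 + (b ^ 2)⁻¹ - a ^ 4 - (a ^ 4)⁻¹
        = (b ^ 2 - a ^ 4) * (a ^ 4 * b ^ 2 - 1) / (a ^ 4 * b ^ 2) := by field_simp; ring
    rw [h2]
    have h3 : 0 < b ^ 2 - a ^ 4 := by linarith
    have h4 : 0 < a ^ 4 * b ^ 2 - 1 := by linarith
    exact div_pos (mul_pos h3 h4) habpos
  have hCpos : 0 < C := by
    rw [hCdef]
    have h2 : b ^ 2 + (b ^ 2)⁻¹ - 2 = (b ^ 2 - 1) ^ 2 / b ^ 2 := by field_simp; ring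
    rw [h2]
    have h3 : 0 < b ^ 2 - 1 := by linarith
    positivity
  -- rewrite hypotheses in terms of A, B, C
  simp only [hA4, hA4', h2d, h2d', h4c, h4c'] at hα1 hα2 hα3
  rw [← hAdef, ← hBdef] at hα1
  rw [← hBdef, ← hCdef] at hα2 hα3
  have hlog1 : α1 = (1 / 4) * (Real.log A - Real.log B) := by
    rw [hα1, Real.log_div hApos.ne' hBpos.ne']
  have hlog2 : α2 = (1 / 4) * (Real.log B - Real.log C) := by
    rw [hα2, Real.log_div hBpos.ne' hCpos.ne']
  have hlog3 : α3 = (1 / 4) * (Real.log B + Real.log C) := by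
    rw [hα3, Real.log_mul hBpos.ne' hCpos.ne']
  -- generic sinh rewriting
  intro s1 s2 hs1 hs2
  rcases hs1 with rfl | rfl <;> rcases hs2 with rfl | rfl
  · -- s1 = s2 = -1 : exponent = log B - (1/2) log A,  target = b/a^2 - a^2/b
    have hexp : α1 * (-1 + -1) + α2 * (-1 * -1) + α3 = (1 / 2) * Real.log (B ^ 2 / A) := by
      rw [hlog1, hlog2, hlog3, Real.log_div (by positivity) hApos.ne', Real.log_pow]
      push_cast; ring
    rw [hexp]
    have hy : 2 * Real.sinh (d2 + c1 * (-1 + -1)) = b / a ^ 2 - a ^ 2 / b := by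
      rw [Real.sinh_eq]
      have e1 : Real.exp (d2 + c1 * (-1 + -1)) = b / a ^ 2 := by
        rw [show d2 + c1 * (-1 + -1) = d2 - 2 * c1 by ring, Real.exp_sub, ha, hb,
          ← Real.exp_nat_mul]; norm_num
      have e2 : Real.exp (-(d2 + c1 * (-1 + -1))) = a ^ 2 / b := by
        rw [Real.exp_neg, e1]
        field_simp
      rw [e1, e2]; ring
    rw [hy]
    apply half_log_eq _ _ (by positivity)
    · have h1 : b / a ^ 2 - a ^ 2 / b = (b ^ 2 - a ^ 4) / (a ^ 2 * b) := by
        field_simp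
      rw [h1]
      have h3 : 0 < b ^ 2 - a ^ 4 := by linarith
      positivity
    · rw [eq_div_iff hApos.ne', hAdef, hBdef]; field_simp; ring
  · -- s1 = -1, s2 = 1 : exponent = (1/2) log C, target = b - b⁻¹
    have hexp : α1 * (-1 + 1) + α2 * (-1 * 1) + α3 = (1 / 2) * Real.log C := by
      rw [hlog1, hlog2, hlog3]; ring
    rw [hexp]
    have hy : 2 * Real.sinh (d2 + c1 * (-1 + 1)) = b - b⁻¹ := by
      rw [Real.sinh_eq]
      have e1 : Real.exp (d2 + c1 * (-1 + 1)) = b := by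
        rw [show d2 + c1 * (-1 + 1) = d2 by ring, hb]
      have e2 : Real.exp (-(d2 + c1 * (-1 + 1))) = b⁻¹ := by rw [Real.exp_neg, e1]
      rw [e1, e2]; ring
    rw [hy]
    apply half_log_eq _ _ hCpos
    · have : 1 < b := by rw [hb]; exact Real.one_lt_exp_iff.mpr (by linarith)
      have : b⁻¹ < 1 := by
        rw [inv_lt_one_iff₀]; right; exact this
      linarith
    · rw [hCdef]; field_simp; ring
  · -- s1 = 1, s2 = -1 : same as previous
    have hexp : α1 * (1 + -1) + α2 * (1 * -1) + α3 = (1 / 2) * Real.log C := by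
      rw [hlog1, hlog2, hlog3]; ring
    rw [hexp]
    have hy : 2 * Real.sinh (d2 + c1 * (1 + -1)) = b - b⁻¹ := by
      rw [Real.sinh_eq]
      have e1 : Real.exp (d2 + c1 * (1 + -1)) = b := by
        rw [show d2 + c1 * (1 + -1) = d2 by ring, hb]
      have e2 : Real.exp (-(d2 + c1 * (1 + -1))) = b⁻¹ := by rw [Real.exp_neg, e1]
      rw [e1, e2]; ring
    rw [hy]
    apply half_log_eq _ _ hCpos
    · have : 1 < b := by rw [hb]; exact Real.one_lt_exp_iff.mpr (by linarith)
      have : b⁻¹ < 1 := by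
        rw [inv_lt_one_iff₀]; right; exact this
      linarith
    · rw [hCdef]; field_simp; ring
  · -- s1 = s2 = 1 : exponent = (1/2) log A, target = a^2*b - (a^2*b)⁻¹
    have hexp : α1 * (1 + 1) + α2 * (1 * 1) + α3 = (1 / 2) * Real.log A := by
      rw [hlog1, hlog2, hlog3]; ring
    rw [hexp]
    have hy : 2 * Real.sinh (d2 + c1 * (1 + 1)) = a ^ 2 * b - (a ^ 2 * b)⁻¹ := by
      rw [Real.sinh_eq]
      have e1 : Real.exp (d2 + c1 * (1 + 1)) = a ^ 2 * b := by
        rw [show d2 + c1 * (1 + 1) = 2 * c1 + d2 by ring, Real.exp_add, ha, hb,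
          ← Real.exp_nat_mul]; norm_num
      have e2 : Real.exp (-(d2 + c1 * (1 + 1))) = (a ^ 2 * b)⁻¹ := by rw [Real.exp_neg, e1]
      rw [e1, e2]; ring
    rw [hy]
    apply half_log_eq _ _ hApos
    · have h1 : 1 < a ^ 2 * b := by
        have h2 : a ^ 2 * b = Real.exp (2 * c1 + d2) := by
          rw [Real.exp_add, ha, hb, ← Real.exp_nat_mul]; norm_num
        rw [h2]
        exact Real.one_lt_exp_iff.mpr (by linarith)
      have : (a ^ 2 * b)⁻¹ < 1 := by rw [inv_lt_one_iff₀]; right; exact h1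
      linarith
    · rw [hAdef]; field_simp; ring
end

section
/- Let c3 > 0 and c4 be real numbers, write u(t) := c3·t + c4, and let g, h : ℝ → ℝ be functions such that g(t) > 0 for all sufficiently large t, (h(t) − 2·g(t))·log(u(t)) → +∞ as t → ∞, and h(t)·log(u(t)) → +∞ as t → ∞. Then the quantity α2(t) := (1/4)·log((u(t)^{h(t)} + u(t)^{−h(t)} − u(t)^{2·g(t)} − u(t)^{−2·g(t)})/(u(t)^{h(t)} + u(t)^{−h(t)} − 2)) tends to 0 as t → ∞. -/
open Real Filter

theorem stmt_11 (c3 c4 : ℝ) (hc3 : 0 < c3) (g h : ℝ → ℝ)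
    (hg : ∀ᶠ t in atTop, 0 < g t)
    (hdiff : Tendsto (fun t => (h t - 2 * g t) * Real.log (c3 * t + c4)) atTop atTop)
    (hh : Tendsto (fun t => h t * Real.log (c3 * t + c4)) atTop atTop) :
    Tendsto (fun t =>
      (1 / 4) * Real.log
        (((c3 * t + c4) ^ (h t) + (c3 * t + c4) ^ (-h t)
            - (c3 * t + c4) ^ (2 * g t) - (c3 * t + c4) ^ (-(2 * g t))) /
          ((c3 * t + c4) ^ (h t) + (c3 * t + c4) ^ (-h t) - 2)))
      atTop (nhds 0) := by
  set u : ℝ → ℝ := fun t => c3 * t + c4 with hudef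
  have hU : Tendsto u atTop atTop :=
    tendsto_atTop_add_const_right _ _ (tendsto_id.const_mul_atTop hc3)
  have hu1 : ∀ᶠ t in atTop, 1 < u t := hU.eventually_gt_atTop 1
  set a : ℝ → ℝ := fun t => u t ^ (h t) with hadef
  set b : ℝ → ℝ := fun t => u t ^ (2 * g t) with hbdef
  have ha : Tendsto a atTop atTop := by
    refine (Real.tendsto_exp_atTop.comp hh).congr' ?_
    filter_upwards [hu1] with t ht
    show Real.exp (h t * Real.log (u t)) = u t ^ (h t)
    rw [Real.rpow_def_of_pos (by linarith), mul_comm]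
  have hba : Tendsto (fun t => b t / a t) atTop (nhds 0) := by
    have h1 : Tendsto (fun t => -((h t - 2 * g t) * Real.log (u t))) atTop atBot :=
      tendsto_neg_atBot_iff.2 hdiff
    refine (Real.tendsto_exp_atBot.comp h1).congr' ?_
    filter_upwards [hu1] with t ht
    show Real.exp (-((h t - 2 * g t) * Real.log (u t))) = u t ^ (2 * g t) / u t ^ (h t)
    rw [Real.rpow_def_of_pos (by linarith), Real.rpow_def_of_pos (by linarith),
      ← Real.exp_sub]
    congr 1; ring
  have hb1 : ∀ᶠ t in atTop, 1 ≤ b t := by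
    filter_upwards [hu1, hg] with t ht hgt
    exact Real.one_le_rpow ht.le (by linarith)
  have ha4 : ∀ᶠ t in atTop, 4 ≤ a t := ha.eventually_ge_atTop 4
  have hD : Tendsto (fun t => (b t + (b t)⁻¹ - 2) / (a t + (a t)⁻¹ - 2)) atTop (nhds 0) := by
    have hlim : Tendsto (fun t => 2 * (b t / a t)) atTop (nhds 0) := by
      have := hba.const_mul 2
      simpa using this
    refine squeeze_zero' ?_ ?_ hlim
    · filter_upwards [hb1, ha4] with t hb ha
      have hbpos : (0:ℝ) < b t := by linarith
      have hbb : b t * (b t)⁻¹ = 1 := mul_inv_cancel₀ (ne_of_gt hbpos)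
      have hapos : (0:ℝ) < a t := by linarith
      have haa : a t * (a t)⁻¹ = 1 := mul_inv_cancel₀ (ne_of_gt hapos)
      have hainv : (0:ℝ) ≤ (a t)⁻¹ := by positivity
      have hN : 0 ≤ b t + (b t)⁻¹ - 2 := by nlinarith [sq_nonneg (b t - 1)]
      have hDe : 0 < a t + (a t)⁻¹ - 2 := by linarith
      positivity
    · filter_upwards [hb1, ha4] with t hb ha
      have hbpos : (0:ℝ) < b t := by linarith
      have hapos : (0:ℝ) < a t := by linarith
      have hbinv : (b t)⁻¹ ≤ 1 := inv_le_one_of_one_le₀ hb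
      have hainv : (0:ℝ) ≤ (a t)⁻¹ := by positivity
      have hNle : b t + (b t)⁻¹ - 2 ≤ b t := by linarith
      have hDge : a t / 2 ≤ a t + (a t)⁻¹ - 2 := by linarith
      have := div_le_div₀ (by positivity) hNle (by linarith : (0:ℝ) < a t / 2) hDge
      calc (b t + (b t)⁻¹ - 2) / (a t + (a t)⁻¹ - 2) ≤ b t / (a t / 2) := this
        _ = 2 * (b t / a t) := by field_simp
  have hR : Tendsto (fun t => (a t + (a t)⁻¹ - b t - (b t)⁻¹) / (a t + (a t)⁻¹ - 2))
      atTop (nhds 1) := by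
    have h1 : Tendsto (fun t => 1 - (b t + (b t)⁻¹ - 2) / (a t + (a t)⁻¹ - 2))
        atTop (nhds 1) := by
      have := (tendsto_const_nhds (x := (1:ℝ)) (f := atTop)).sub hD
      simpa using this
    refine h1.congr' ?_
    filter_upwards [hb1, ha4] with t hb ha
    have hapos : (0:ℝ) < a t := by linarith
    have hainv : (0:ℝ) ≤ (a t)⁻¹ := by positivity
    have hDe : a t + (a t)⁻¹ - 2 ≠ 0 := by intro hx; linarith [hx]
    have hkey : a t + (a t)⁻¹ - b t - (b t)⁻¹
        = (a t + (a t)⁻¹ - 2) - (b t + (b t)⁻¹ - 2) := by ring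
    rw [hkey, sub_div (a t + (a t)⁻¹ - 2) (b t + (b t)⁻¹ - 2), div_self hDe]
  have hlog : Tendsto (fun t => (1/4 : ℝ) * Real.log
      ((a t + (a t)⁻¹ - b t - (b t)⁻¹) / (a t + (a t)⁻¹ - 2))) atTop (nhds 0) := by
    have hc : Tendsto (fun t => Real.log
        ((a t + (a t)⁻¹ - b t - (b t)⁻¹) / (a t + (a t)⁻¹ - 2))) atTop (nhds 0) := by
      have := ((Real.continuousAt_log one_ne_zero).tendsto).comp hR
      simpa [Function.comp_def] using this
    have := hc.const_mul (1/4 : ℝ)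
    simpa using this
  refine hlog.congr' ?_
  filter_upwards [hu1] with t ht
  have hupos : (0:ℝ) ≤ u t := by linarith
  rw [hadef, hbdef]
  simp only []
  rw [Real.rpow_neg hupos, Real.rpow_neg hupos]
end

section
/- Let c3 > 0 and c4 be real numbers, write u(t) := c3·t + c4, and let g, h : ℝ → ℝ be differentiable functions such that: for some constants G > 0 and c' > 0 and all sufficiently large t, 0 < g(t) ≤ G and |g'(t)| ≤ c'/(u(t)·log(u(t))); h(t)/u(t) → 0 as t → ∞; h'(t)·log(u(t)) → 0 as t → ∞; and (2·g(t) − h(t))·log(u(t)) → −∞ as t → ∞. Then the derivative of the function t ↦ log(u(t)^{h(t)} − u(t)^{2·g(t)}) tends to 0 as t → ∞; explicitly, (h'(t)·log(u(t)) + c3·h(t)/u(t) − 2·g'(t)·u(t)^{2g(t)−h(t)}·log(u(t)) − 2·c3·g(t)·u(t)^{2g(t)−h(t)−1})/(1 − u(t)^{2g(t)−h(t)}) → 0 as t → ∞. -/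
open Real Filter

theorem stmt_12 (c3 c4 : ℝ) (hc3 : 0 < c3) (g h : ℝ → ℝ)
    (hgdiff : Differentiable ℝ g) (hhdiff : Differentiable ℝ h)
    (G c' : ℝ) (hG : 0 < G) (hc' : 0 < c')
    (hg : ∀ᶠ t in atTop, 0 < g t ∧ g t ≤ G ∧
      |deriv g t| ≤ c' / ((c3 * t + c4) * Real.log (c3 * t + c4)))
    (hhu : Tendsto (fun t => h t / (c3 * t + c4)) atTop (nhds 0))
    (hh' : Tendsto (fun t => deriv h t * Real.log (c3 * t + c4)) atTop (nhds 0))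
    (hgap : Tendsto (fun t => (2 * g t - h t) * Real.log (c3 * t + c4)) atTop atBot) :
    Tendsto (fun t =>
      (deriv h t * Real.log (c3 * t + c4) + c3 * h t / (c3 * t + c4)
          - 2 * deriv g t * (c3 * t + c4) ^ (2 * g t - h t) * Real.log (c3 * t + c4)
          - 2 * c3 * g t * (c3 * t + c4) ^ (2 * g t - h t - 1)) /
        (1 - (c3 * t + c4) ^ (2 * g t - h t)))
      atTop (nhds 0) := by
  have hu : Tendsto (fun t => c3 * t + c4) atTop atTop :=
    tendsto_atTop_add_const_right _ c4 (tendsto_id.const_mul_atTop hc3)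
  have hlogu : Tendsto (fun t => Real.log (c3 * t + c4)) atTop atTop :=
    tendsto_log_atTop.comp hu
  -- E → 0
  have hE : Tendsto (fun t => (c3 * t + c4) ^ (2 * g t - h t)) atTop (nhds 0) := by
    have h1 : Tendsto (fun t => Real.exp ((2 * g t - h t) * Real.log (c3 * t + c4)))
        atTop (nhds 0) := Real.tendsto_exp_atBot.comp hgap
    refine h1.congr' ?_
    filter_upwards [hu.eventually_gt_atTop 0] with t ht
    rw [Real.rpow_def_of_pos ht, mul_comm]
  -- E' → 0
  have hgap' : Tendsto (fun t => (2 * g t - h t - 1) * Real.log (c3 * t + c4)) atTop atBot := by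
    have hneg : Tendsto (fun t => -Real.log (c3 * t + c4)) atTop atBot :=
      tendsto_neg_atTop_atBot.comp hlogu
    have := Filter.Tendsto.atBot_add_atBot hgap hneg
    refine this.congr fun t => by ring
  have hE' : Tendsto (fun t => (c3 * t + c4) ^ (2 * g t - h t - 1)) atTop (nhds 0) := by
    have h1 : Tendsto (fun t => Real.exp ((2 * g t - h t - 1) * Real.log (c3 * t + c4)))
        atTop (nhds 0) := Real.tendsto_exp_atBot.comp hgap'
    refine h1.congr' ?_
    filter_upwards [hu.eventually_gt_atTop 0] with t ht
    rw [Real.rpow_def_of_pos ht, mul_comm]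
  -- term 2
  have h2 : Tendsto (fun t => c3 * h t / (c3 * t + c4)) atTop (nhds 0) := by
    have := hhu.const_mul c3
    simp only [mul_zero] at this
    refine this.congr fun t => by ring
  -- term 3
  have h3 : Tendsto (fun t =>
      2 * deriv g t * (c3 * t + c4) ^ (2 * g t - h t) * Real.log (c3 * t + c4))
      atTop (nhds 0) := by
    have hb : Tendsto (fun t => 2 * c' * (c3 * t + c4) ^ (2 * g t - h t)) atTop (nhds 0) := by
      have := hE.const_mul (2 * c')
      simpa using this
    refine squeeze_zero_norm' ?_ hb
    filter_upwards [hg, hu.eventually_gt_atTop 1] with t ht ht1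
    obtain ⟨hg1, hg2, hg3⟩ := ht
    set u := c3 * t + c4
    set L := Real.log u with hL_def
    have hLpos : 0 < L := Real.log_pos ht1
    have hupos : (0:ℝ) < u := by linarith
    have hEpos : (0:ℝ) < u ^ (2 * g t - h t) := Real.rpow_pos_of_pos hupos _
    have hb2 : |deriv g t| * (u * L) ≤ c' := by
      have := (le_div_iff₀ (by positivity)).mp hg3
      linarith
    have haL : |deriv g t| * L ≤ c' := by
      nlinarith [abs_nonneg (deriv g t), mul_nonneg (mul_nonneg (abs_nonneg (deriv g t)) hLpos.le) (by linarith : (0:ℝ) ≤ u - 1)]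
    rw [Real.norm_eq_abs, abs_mul, abs_mul, abs_mul]
    rw [abs_of_pos hEpos, abs_of_pos hLpos]
    have h2' : |(2:ℝ)| = 2 := by norm_num
    rw [h2']
    nlinarith [mul_le_mul_of_nonneg_left haL hEpos.le, abs_nonneg (deriv g t)]
  -- term 4
  have h4 : Tendsto (fun t =>
      2 * c3 * g t * (c3 * t + c4) ^ (2 * g t - h t - 1)) atTop (nhds 0) := by
    have hb : Tendsto (fun t => 2 * c3 * G * (c3 * t + c4) ^ (2 * g t - h t - 1))
        atTop (nhds 0) := by
      have := hE'.const_mul (2 * c3 * G)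
      simpa using this
    refine squeeze_zero_norm' ?_ hb
    filter_upwards [hg, hu.eventually_gt_atTop 1] with t ht ht1
    obtain ⟨hg1, hg2, _⟩ := ht
    have hupos : (0:ℝ) < c3 * t + c4 := by linarith
    have hEpos : (0:ℝ) < (c3 * t + c4) ^ (2 * g t - h t - 1) := Real.rpow_pos_of_pos hupos _
    rw [Real.norm_eq_abs, abs_mul, abs_mul, abs_mul]
    rw [abs_of_pos hEpos, abs_of_pos hc3, abs_of_pos hg1]
    have h2' : |(2:ℝ)| = 2 := by norm_num
    rw [h2']
    nlinarith [mul_le_mul_of_nonneg_left hg2 (by positivity : (0:ℝ) ≤ 2 * c3 * (c3 * t + c4) ^ (2 * g t - h t - 1))]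
  -- numerator and denominator
  have hnum : Tendsto (fun t =>
      deriv h t * Real.log (c3 * t + c4) + c3 * h t / (c3 * t + c4)
        - 2 * deriv g t * (c3 * t + c4) ^ (2 * g t - h t) * Real.log (c3 * t + c4)
        - 2 * c3 * g t * (c3 * t + c4) ^ (2 * g t - h t - 1)) atTop (nhds 0) := by
    have := ((hh'.add h2).sub h3).sub h4
    simpa using this
  have hden : Tendsto (fun t => 1 - (c3 * t + c4) ^ (2 * g t - h t)) atTop (nhds 1) := by
    have := (tendsto_const_nhds (x := (1:ℝ)) (f := atTop)).sub hE
    simpa using this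
  have := hnum.div hden one_ne_zero
  simpa [Pi.div_def] using this
end

section
/- Let c3 > 0, c4 be real numbers and N ≥ 1 a natural number; let g, h : ℝ → ℝ with h twice differentiable, and let t be such that u := c3·t + c4 satisfies u ≥ 1 (and u > 1 where logarithms appear) and 0 < g(t) ≤ 1/(2·N) and h(t) ≥ 0. Define d2(s) := (h(s)/2)·log(c3·s + c4). Then |d2''(t)| · u^{2·N·g(t)} ≤ (1/2)·(c3²·h(t)/u + |h''(t)|·u·log(u) + 2·c3·|h'(t)|). -/
/-! With u = c3·t + c4, the second derivative of (h/2)·log u is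
(h''/2)·log u + c3·h'/u − c3²·h/(2u²); bound it term by term with the triangle inequality,
and use 2·N·g(t) ≤ 1 together with u ≥ 1 to get u^(2·N·g(t)) ≤ u. -/

open Real Filter Topology

theorem hasDerivAt_deriv_mul_log_affine {f f' : ℝ → ℝ} {f'' a b t : ℝ}
    (hf : ∀ᶠ s in 𝓝 t, HasDerivAt f (f' s) s) (hf' : HasDerivAt f' f'' t)
    (ht : 0 < a * t + b) :
    HasDerivAt (deriv fun s => f s * log (a * s + b))
      (f'' * log (a * t + b) + 2 * a * f' t / (a * t + b) - a ^ 2 * f t / (a * t + b) ^ 2) t := by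
  have hlin : ∀ s, HasDerivAt (fun s => a * s + b) a s := fun s => by
    simpa using ((hasDerivAt_id s).const_mul a).add_const b
  have hpos : ∀ᶠ s in 𝓝 t, 0 < a * s + b := (hlin t).continuousAt.eventually (lt_mem_nhds ht)
  have hderiv : deriv (fun s => f s * log (a * s + b)) =ᶠ[𝓝 t]
      fun s => f' s * log (a * s + b) + f s * (a / (a * s + b)) := by
    filter_upwards [hf, hpos] with s hfs hs
    exact (hfs.mul ((hlin s).log hs.ne')).deriv
  refine HasDerivAt.congr_of_eventuallyEq ?_ hderiv
  have hinv : HasDerivAt (fun s => a / (a * s + b)) (a * -(a / (a * t + b) ^ 2)) t := by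
    simpa [div_eq_mul_inv] using ((hlin t).inv ht.ne').const_mul a
  have hsum : HasDerivAt (fun s => f' s * log (a * s + b) + f s * (a / (a * s + b)))
      (f'' * log (a * t + b) + f' t * (a / (a * t + b)) + (f' t * (a / (a * t + b)) +
        f t * (a * -(a / (a * t + b) ^ 2)))) t :=
    (hf'.mul ((hlin t).log ht.ne')).add (hf.self_of_nhds.mul hinv)
  exact hsum.congr_deriv (by field_simp; ring)

theorem abs_mul_add_div_sub_div_sq_mul_le {a u L p q y : ℝ} (ha : 0 ≤ a) (hu : 0 < u)
    (hL : 0 ≤ L) (hy : 0 ≤ y) :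
    |p * L + 2 * a * q / u - a ^ 2 * y / u ^ 2| * u ≤
      |p| * u * L + 2 * a * |q| + a ^ 2 * y / u := by
  have htri : |p * L + 2 * a * q / u - a ^ 2 * y / u ^ 2| ≤
      |p| * L + 2 * a * |q| / u + a ^ 2 * y / u ^ 2 := by
    calc _ ≤ |p * L| + |2 * a * q / u| + |a ^ 2 * y / u ^ 2| :=
          (abs_sub _ _).trans (add_le_add_left (abs_add_le _ _) _)
      _ = _ := by
        rw [abs_mul, abs_of_nonneg hL, abs_div, abs_of_pos hu, abs_mul,
          abs_of_nonneg (by positivity : 0 ≤ 2 * a),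
          abs_of_nonneg (by positivity : 0 ≤ a ^ 2 * y / u ^ 2)]
  calc _ ≤ (|p| * L + 2 * a * |q| / u + a ^ 2 * y / u ^ 2) * u :=
        mul_le_mul_of_nonneg_right htri hu.le
    _ = _ := by field_simp

theorem stmt_19_general (c3 c4 : ℝ) (hc3 : 0 < c3) (N : ℕ)
    (g h : ℝ → ℝ) (hhdiff : Differentiable ℝ h) (hhdiff2 : Differentiable ℝ (deriv h))
    (t : ℝ) (hu : 1 < c3 * t + c4)
    (hg1 : g t ≤ 1 / (2 * N)) (hh0 : 0 ≤ h t) :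
    |deriv (deriv (fun s => (h s / 2) * Real.log (c3 * s + c4))) t| *
        (c3 * t + c4) ^ (2 * (N : ℝ) * g t) ≤
      (1 / 2) * (c3 ^ 2 * h t / (c3 * t + c4)
        + |deriv (deriv h) t| * (c3 * t + c4) * Real.log (c3 * t + c4)
        + 2 * c3 * |deriv h t|) := by
  set u := c3 * t + c4
  have hu0 : 0 < u := one_pos.trans hu
  have hexp : 2 * (N : ℝ) * g t ≤ 1 :=
    (mul_le_mul_of_nonneg_left hg1 (by positivity)).trans
      (by rw [mul_one_div]; exact div_self_le_one _)
  rw [(hasDerivAt_deriv_mul_log_affine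
    (Eventually.of_forall fun s => (hhdiff s).hasDerivAt.div_const 2)
    ((hhdiff2 t).hasDerivAt.div_const 2) hu0).deriv]
  calc _ ≤ |_| * u := mul_le_mul_of_nonneg_left (rpow_le_self_of_one_le hu.le hexp) (abs_nonneg _)
    _ ≤ _ := abs_mul_add_div_sub_div_sq_mul_le hc3.le hu0 (log_nonneg hu.le) (by positivity)
    _ = _ := by rw [abs_div, abs_div, abs_two]; ring

theorem stmt_19 (c3 c4 : ℝ) (hc3 : 0 < c3) (N : ℕ) (hN : 1 ≤ N)
    (g h : ℝ → ℝ) (hhdiff : Differentiable ℝ h) (hhdiff2 : Differentiable ℝ (deriv h))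
    (t : ℝ) (hu : 1 < c3 * t + c4)
    (hg0 : 0 < g t) (hg1 : g t ≤ 1 / (2 * N)) (hh0 : 0 ≤ h t) :
    |deriv (deriv (fun s => (h s / 2) * Real.log (c3 * s + c4))) t| *
        (c3 * t + c4) ^ (2 * (N : ℝ) * g t) ≤
      (1 / 2) * (c3 ^ 2 * h t / (c3 * t + c4)
        + |deriv (deriv h) t| * (c3 * t + c4) * Real.log (c3 * t + c4)
        + 2 * c3 * |deriv h t|) :=
  stmt_19_general c3 c4 hc3 N g h hhdiff hhdiff2 t hu hg1 hh0
end
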